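/- arXiv:2212.04695 — 8 statements merged into one kernel-verified Lean document; each statement's English description precedes it below -/
import Mathlib

section
/- The power graph of a finite group G is complete if and only if G is cyclic of order 1 or p^m for some prime p and natural number m. -/
/-!
If any two elements of `G` generate comparable cyclic subgroups, an element of maximal order
generates everything, and elements of prime orders `p` and `q` force `p ∣ q`, so only one prime
divides `|G|`. Conversely, in a cyclic group `x ∈ ⟨y⟩` iff `orderOf x ∣ orderOf y`, and the
divisors of `p ^ m` form a chain under divisibility.
-/

/-- The power graph of a group: distinct `x, y` adjacent iff one generates a
subgroup containing the other. -/
def powerGraph (G : Type*) [Group G] : SimpleGraph G where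
  Adj x y := x ≠ y ∧ (x ∈ Subgroup.zpowers y ∨ y ∈ Subgroup.zpowers x)
  symm := ⟨fun x y h => ⟨h.1.symm, h.2.symm⟩⟩
  loopless := ⟨fun x h => h.1 rfl⟩

/-- The proper power graph: the power graph with the identity vertex removed. -/
def properPowerGraph (G : Type*) [Group G] : SimpleGraph {g : G // g ≠ 1} :=
  (powerGraph G).induce {g : G | g ≠ 1}

/-- The tree-number (complexity): number of spanning trees of a graph. -/
noncomputable def SimpleGraph.treeNumber {V : Type*} (Γ : SimpleGraph V) : ℕ :=
  Nat.card {H : Γ.Subgraph // H.IsSpanning ∧ H.coe.IsTree}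

open Subgroup

theorem powerGraph_eq_top_iff {G : Type*} [Group G] :
    powerGraph G = ⊤ ↔ ∀ x y : G, x ∈ zpowers y ∨ y ∈ zpowers x := by
  constructor
  · intro h x y
    by_cases hxy : x = y
    · exact .inl (hxy ▸ mem_zpowers x)
    · have hadj : (powerGraph G).Adj x y := h ▸ hxy
      exact hadj.2
  · intro h
    ext x y
    exact ⟨fun hadj => hadj.1, fun hxy => ⟨hxy, h x y⟩⟩

section

variable {G : Type*} [Group G] [Finite G]

theorem isCyclic_of_forall_mem_zpowers_or_mem_zpowers
    (h : ∀ x y : G, x ∈ zpowers y ∨ y ∈ zpowers x) : IsCyclic G := by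
  obtain ⟨x, hx⟩ := Finite.exists_max (orderOf : G → ℕ)
  refine ⟨x, fun y => ?_⟩
  show y ∈ zpowers x
  rcases h y x with hy | hxy
  · exact hy
  · have hle : zpowers x ≤ zpowers y := zpowers_le.mpr hxy
    have hcard : Nat.card (zpowers y) ≤ Nat.card (zpowers x) := by
      simpa only [Nat.card_zpowers] using hx y
    exact eq_of_le_of_card_ge hle hcard ▸ mem_zpowers y

theorem eq_of_prime_dvd_card_of_forall_mem_zpowers_or_mem_zpowers
    (h : ∀ x y : G, x ∈ zpowers y ∨ y ∈ zpowers x) {p q : ℕ} (hp : p.Prime) (hq : q.Prime)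
    (hpG : p ∣ Nat.card G) (hqG : q ∣ Nat.card G) : p = q := by
  have := Fact.mk hp
  have := Fact.mk hq
  obtain ⟨a, ha⟩ := exists_prime_orderOf_dvd_card' p hpG
  obtain ⟨b, hb⟩ := exists_prime_orderOf_dvd_card' q hqG
  rcases h a b with hab | hba
  · exact (Nat.prime_dvd_prime_iff_eq hp hq).mp (ha ▸ hb ▸ orderOf_dvd_of_mem_zpowers hab)
  · exact ((Nat.prime_dvd_prime_iff_eq hq hp).mp (ha ▸ hb ▸ orderOf_dvd_of_mem_zpowers hba)).symm

theorem IsCyclic.mem_zpowers_iff_orderOf_dvd [IsCyclic G] {x y : G} :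
    x ∈ zpowers y ↔ orderOf x ∣ orderOf y := by
  classical
  have := Fintype.ofFinite G
  refine ⟨orderOf_dvd_of_mem_zpowers, fun hxy => ?_⟩
  set S := Finset.univ.filter fun a : G => a ^ orderOf y = 1
  -- In a cyclic group `a ^ n = 1` has at most `n` solutions, so `⟨y⟩` is all of them for `n = orderOf y`.
  have hsub : (zpowers y : Set G).toFinset ⊆ S := fun a ha => by
    simpa [S] using orderOf_dvd_iff_pow_eq_one.mp (orderOf_dvd_of_mem_zpowers (by simpa using ha))
  have heq : (zpowers y : Set G).toFinset = S :=
    Finset.eq_of_subset_of_card_le hsub <| by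
      rw [Set.toFinset_card, ← Nat.card_eq_fintype_card, SetLike.coe_sort_coe, Nat.card_zpowers]
      exact IsCyclic.card_pow_eq_one_le (orderOf_pos y)
  have hxS : x ∈ S := by simpa [S] using orderOf_dvd_iff_pow_eq_one.mp hxy
  simpa [← heq] using hxS

theorem IsCyclic.mem_zpowers_or_mem_zpowers_of_card_eq_prime_pow [IsCyclic G] {p m : ℕ}
    (hp : p.Prime) (hG : Nat.card G = p ^ m) (x y : G) : x ∈ zpowers y ∨ y ∈ zpowers x := by
  obtain ⟨a, -, hxa⟩ := (Nat.dvd_prime_pow hp).mp (hG ▸ orderOf_dvd_natCard x)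
  obtain ⟨b, -, hyb⟩ := (Nat.dvd_prime_pow hp).mp (hG ▸ orderOf_dvd_natCard y)
  simp only [IsCyclic.mem_zpowers_iff_orderOf_dvd, hxa, hyb]
  exact (le_total a b).imp (pow_dvd_pow p) (pow_dvd_pow p)

end

theorem Nat.eq_one_or_exists_eq_prime_pow_of_unique_prime_dvd {n : ℕ} (hn : n ≠ 0)
    (h : ∀ p q : ℕ, p.Prime → q.Prime → p ∣ n → q ∣ n → p = q) :
    n = 1 ∨ ∃ p m : ℕ, p.Prime ∧ n = p ^ m := by
  by_cases h1 : n = 1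
  · exact .inl h1
  · refine .inr ⟨n.minFac, _, minFac_prime h1, eq_prime_pow_of_unique_prime_dvd hn ?_⟩
    exact fun hd hdn => h _ _ hd (minFac_prime h1) hdn (minFac_dvd n)

/-- The power graph of a finite group `G` is complete iff `G` is cyclic of order `1`
or `p ^ m` for some prime `p` and natural number `m`. -/
theorem powerGraph_complete_iff (G : Type*) [Group G] [Fintype G] :
    powerGraph G = ⊤ ↔
      IsCyclic G ∧ (Fintype.card G = 1 ∨
        ∃ p m : ℕ, p.Prime ∧ Fintype.card G = p ^ m) := by
  rw [powerGraph_eq_top_iff, ← Nat.card_eq_fintype_card]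
  constructor
  · intro h
    exact ⟨isCyclic_of_forall_mem_zpowers_or_mem_zpowers h,
      Nat.eq_one_or_exists_eq_prime_pow_of_unique_prime_dvd Nat.card_pos.ne' fun _ _ hp hq =>
        eq_of_prime_dvd_card_of_forall_mem_zpowers_or_mem_zpowers h hp hq⟩
  · rintro ⟨hcyc, h1 | ⟨p, m, hp, hG⟩⟩
    · exact IsCyclic.mem_zpowers_or_mem_zpowers_of_card_eq_prime_pow Nat.prime_two
        (h1.trans (pow_zero 2).symm)
    · exact IsCyclic.mem_zpowers_or_mem_zpowers_of_card_eq_prime_pow hp hG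
end

section
/- Let G be a finite p-group for a prime p. Then the proper power graph P*(G) (the power graph with the identity vertex removed) has exactly c_p connected components, where c_p is the number of distinct cyclic subgroups of order p in G. -/
/-!
Every `g ≠ 1` of a `p`-group generates a cyclic `p`-group, whose unique subgroup of order `p`
is `⟨g ^ (|g| / p)⟩`. This subgroup is constant on connected components of `P*(G)`: if
`x ∈ ⟨y⟩`, the order-`p` subgroup of `⟨x⟩` is one of `⟨y⟩`. Conversely `g` is adjacent to
`g ^ (|g| / p)`, and two generators of the same subgroup are adjacent, so vertices with the same
order-`p` subgroup lie in one component. Hence components correspond to subgroups of order `p`.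
-/

open Subgroup

theorem SimpleGraph.card_connectedComponent_eq_card_range {V α : Type*} {Γ : SimpleGraph V}
    (f : V → α) (hf : ∀ u v, Γ.Reachable u v ↔ f u = f v) :
    Nat.card Γ.ConnectedComponent = Nat.card (Set.range f) :=
  Nat.card_congr ((Quot.congrRight hf).trans (Setoid.quotientKerEquivRange f))

theorem SimpleGraph.Reachable.eq_of_forall_adj_eq {V α : Type*} {Γ : SimpleGraph V} {f : V → α}
    (hf : ∀ u v, Γ.Adj u v → f u = f v) {u v : V} (h : Γ.Reachable u v) : f u = f v := by
  rw [SimpleGraph.reachable_eq_reflTransGen] at h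
  simpa only [Relation.reflTransGen_eq_self] using
    (Relation.ReflTransGen.lift (p := Eq) f hf u v h : Relation.ReflTransGen Eq (f u) (f v))

section CyclicSubgroups

variable {G : Type*} [Group G]

theorem mem_zpowers_pow_orderOf_div_of_pow_eq_one {g a : G} {n : ℕ} (hg : orderOf g ≠ 0)
    (hn : n ∣ orderOf g) (ha : a ∈ zpowers g) (han : a ^ n = 1) :
    a ∈ zpowers (g ^ (orderOf g / n)) := by
  obtain ⟨k, rfl⟩ := mem_zpowers_iff.mp ha
  obtain ⟨m, hm⟩ := hn
  have hn0 : n ≠ 0 := left_ne_zero_of_mul (hm ▸ hg)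
  have hmk : (m : ℤ) ∣ k := by
    refine Int.dvd_of_mul_dvd_mul_right (Int.natCast_ne_zero.mpr hn0) ?_
    rw [mul_comm (m : ℤ), ← Nat.cast_mul, ← hm, orderOf_dvd_iff_zpow_eq_one, zpow_mul,
      zpow_natCast, han]
  obtain ⟨j, rfl⟩ := hmk
  rw [hm, Nat.mul_div_cancel_left m (Nat.pos_of_ne_zero hn0), zpow_mul, zpow_natCast]
  exact zpow_mem (mem_zpowers _) j

theorem Subgroup.eq_zpowers_pow_orderOf_div_card {g : G} {K : Subgroup G} (hg : orderOf g ≠ 0)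
    (hK : K ≤ zpowers g) (hKg : Nat.card K ∣ orderOf g) :
    K = zpowers (g ^ (orderOf g / Nat.card K)) := by
  have : Finite (zpowers (g ^ (orderOf g / Nat.card K))) :=
    Nat.finite_of_card_ne_zero (by
      rw [Nat.card_zpowers, orderOf_pow_orderOf_div hg hKg]; exact ne_zero_of_dvd_ne_zero hg hKg)
  refine eq_of_le_of_card_ge (fun a ha => ?_) ?_
  · exact mem_zpowers_pow_orderOf_div_of_pow_eq_one hg hKg (hK ha)
      (orderOf_dvd_iff_pow_eq_one.mp (orderOf_dvd_natCard K ha))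
  · rw [Nat.card_zpowers, orderOf_pow_orderOf_div hg hKg]

theorem zpowers_pow_orderOf_div_eq_of_mem_zpowers {x y : G} {p : ℕ} (hy : orderOf y ≠ 0)
    (hpx : p ∣ orderOf x) (hxy : x ∈ zpowers y) :
    zpowers (x ^ (orderOf x / p)) = zpowers (y ^ (orderOf y / p)) := by
  have hx : orderOf x ≠ 0 := ne_zero_of_dvd_ne_zero hy (orderOf_dvd_of_mem_zpowers hxy)
  have hcard : Nat.card (zpowers (x ^ (orderOf x / p))) = p := by
    rw [Nat.card_zpowers, orderOf_pow_orderOf_div hx hpx]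
  have hle : zpowers (x ^ (orderOf x / p)) ≤ zpowers y :=
    (zpowers_le.mpr (pow_mem (mem_zpowers x) _)).trans (zpowers_le.mpr hxy)
  have := eq_zpowers_pow_orderOf_div_card hy hle
    (by rw [hcard]; exact hpx.trans (orderOf_dvd_of_mem_zpowers hxy))
  rwa [hcard] at this

end CyclicSubgroups

theorem properPowerGraph_reachable_of_mem_zpowers {G : Type*} [Group G] {x y : {g : G // g ≠ 1}}
    (h : (x : G) ∈ zpowers (y : G)) : (properPowerGraph G).Reachable x y := by
  by_cases hxy : x = y
  · exact hxy ▸ .rfl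
  · exact SimpleGraph.Adj.reachable ⟨fun h' => hxy (Subtype.ext h'), Or.inl h⟩

section PGroup

variable {G : Type*} [Group G] {p : ℕ} [hp : Fact p.Prime]

theorem IsPGroup.orderOf_ne_zero (hG : IsPGroup p G) (g : G) : orderOf g ≠ 0 :=
  (hG.isOfFinOrder hp.out.ne_zero g).orderOf_pos.ne'

theorem IsPGroup.orderOf_pow_orderOf_div (hG : IsPGroup p G) {g : G} (hg : g ≠ 1) :
    orderOf (g ^ (orderOf g / p)) = p :=
  _root_.orderOf_pow_orderOf_div (hG.orderOf_ne_zero g) (hG.dvd_orderOf hg)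

theorem IsPGroup.range_zpowers_pow_orderOf_div (hG : IsPGroup p G) :
    Set.range (fun g : {g : G // g ≠ 1} => zpowers ((g : G) ^ (orderOf (g : G) / p))) =
      {H : Subgroup G | IsCyclic H ∧ Nat.card H = p} := by
  ext H
  constructor
  · rintro ⟨g, rfl⟩
    exact ⟨inferInstance, by rw [Nat.card_zpowers, hG.orderOf_pow_orderOf_div g.2]⟩
  · rintro ⟨hcyc, hcard⟩
    obtain ⟨a, rfl⟩ := H.isCyclic_iff_exists_zpowers_eq_top.mp hcyc
    have ha : a ≠ 1 := by
      rintro rfl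
      rw [zpowers_one_eq_bot, card_bot] at hcard
      exact hp.out.one_lt.ne hcard
    refine ⟨⟨a, ha⟩, ?_⟩
    dsimp only
    rw [← Nat.card_zpowers, hcard, Nat.div_self hp.out.pos, pow_one]

theorem IsPGroup.properPowerGraph_reachable_iff (hG : IsPGroup p G) {x y : {g : G // g ≠ 1}} :
    (properPowerGraph G).Reachable x y ↔
      zpowers ((x : G) ^ (orderOf (x : G) / p)) = zpowers ((y : G) ^ (orderOf (y : G) / p)) := by
  constructor
  · refine fun h => h.eq_of_forall_adj_eq
      (f := fun g : {g : G // g ≠ 1} => zpowers ((g : G) ^ (orderOf (g : G) / p))) ?_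
    rintro u v ⟨-, huv | hvu⟩
    · exact zpowers_pow_orderOf_div_eq_of_mem_zpowers (hG.orderOf_ne_zero _)
        (hG.dvd_orderOf u.2) huv
    · exact (zpowers_pow_orderOf_div_eq_of_mem_zpowers (hG.orderOf_ne_zero _)
        (hG.dvd_orderOf v.2) hvu).symm
  · intro h
    have hpow_ne_one (g : {g : G // g ≠ 1}) : (g : G) ^ (orderOf (g : G) / p) ≠ 1 := fun h1 =>
      hp.out.one_lt.ne' (by rw [← hG.orderOf_pow_orderOf_div g.2, h1, orderOf_one])
    have hx : (properPowerGraph G).Reachable x ⟨_, hpow_ne_one x⟩ :=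
      (properPowerGraph_reachable_of_mem_zpowers (pow_mem (mem_zpowers _) _)).symm
    have hy : (properPowerGraph G).Reachable ⟨_, hpow_ne_one y⟩ y :=
      properPowerGraph_reachable_of_mem_zpowers (pow_mem (mem_zpowers _) _)
    exact hx.trans ((properPowerGraph_reachable_of_mem_zpowers (h ▸ mem_zpowers _)).trans hy)

end PGroup

theorem properPowerGraph_card_connectedComponent_general (G : Type*) [Group G]
    (p : ℕ) (hp : p.Prime) (hG : ∀ g : G, ∃ n : ℕ, orderOf g = p ^ n) :
    Nat.card (properPowerGraph G).ConnectedComponent =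
      Nat.card {H : Subgroup G // IsCyclic H ∧ Nat.card H = p} := by
  have : Fact p.Prime := ⟨hp⟩
  have hpG : IsPGroup p G := IsPGroup.iff_orderOf.mpr hG
  rw [SimpleGraph.card_connectedComponent_eq_card_range _
      (fun _ _ => hpG.properPowerGraph_reachable_iff), hpG.range_zpowers_pow_orderOf_div]
  rfl

/-- For a finite `p`-group `G`, the proper power graph `P*(G)` has exactly `c_p`
connected components, where `c_p` is the number of cyclic subgroups of order `p`. -/
theorem properPowerGraph_card_connectedComponent (G : Type*) [Group G] [Finite G]
    (p : ℕ) (hp : p.Prime) (hG : ∀ g : G, ∃ n : ℕ, orderOf g = p ^ n) :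
    Nat.card (properPowerGraph G).ConnectedComponent =
      Nat.card {H : Subgroup G // IsCyclic H ∧ Nat.card H = p} :=
  properPowerGraph_card_connectedComponent_general G p hp hG
end

section
/- Let G be a finite group and let Ω be a connected component of the proper power graph P*(G) that is a clique. Then there exists an element β of G of prime power order p^k (p prime) such that Ω equals the vertex set ⟨β⟩ \ {1}. -/
open Subgroup SimpleGraph

section PowerGraph

variable {G : Type*} [Group G]

theorem eq_of_orderOf_prime_of_mem_zpowers {a b : G} {p q : ℕ} (hp : p.Prime) (hq : q.Prime)
    (ha : orderOf a = p) (hb : orderOf b = q) (h : a ∈ zpowers b) : p = q :=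
  (Nat.prime_dvd_prime_iff_eq hp hq).1 (ha ▸ hb ▸ orderOf_dvd_of_mem_zpowers h)

theorem isPrimePow_orderOf_of_pairwise_mem_zpowers {g : G} (hg : IsOfFinOrder g) (hg1 : g ≠ 1)
    (h : ((zpowers g : Set G) \ {1}).Pairwise fun a b => a ∈ zpowers b ∨ b ∈ zpowers a) :
    IsPrimePow (orderOf g) := by
  have hg0 : orderOf g ≠ 0 := hg.orderOf_pos.ne'
  have hpow : ∀ p : ℕ, p.Prime → p ∣ orderOf g →
      g ^ (orderOf g / p) ∈ (zpowers g : Set G) \ {1} ∧ orderOf (g ^ (orderOf g / p)) = p :=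
    fun p hp hpg =>
      have hord := orderOf_pow_orderOf_div hg0 hpg
      ⟨⟨pow_mem (mem_zpowers g) _, fun h1 => hp.ne_one (hord ▸ orderOf_eq_one_iff.2 h1)⟩, hord⟩
  have huniq : ∀ p q : ℕ, p.Prime → p ∣ orderOf g → q.Prime → q ∣ orderOf g → p = q := by
    intro p q hp hpg hq hqg
    by_contra hpq
    obtain ⟨hmem_p, hord_p⟩ := hpow p hp hpg
    obtain ⟨hmem_q, hord_q⟩ := hpow q hq hqg
    have hne : g ^ (orderOf g / p) ≠ g ^ (orderOf g / q) :=
      fun heq => hpq (hord_p ▸ hord_q ▸ congrArg orderOf heq)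
    rcases h hmem_p hmem_q hne with hpq' | hqp
    · exact hpq (eq_of_orderOf_prime_of_mem_zpowers hp hq hord_p hord_q hpq')
    · exact hpq (eq_of_orderOf_prime_of_mem_zpowers hq hp hord_q hord_p hqp).symm
  obtain ⟨p, hp, hpg⟩ := Nat.exists_prime_and_dvd (orderOf_eq_one_iff.not.2 hg1)
  exact isPrimePow_iff_unique_prime_dvd.2
    ⟨p, ⟨hp, hpg⟩, fun q ⟨hq, hqg⟩ => huniq q p hq hqg hp hpg⟩

theorem properPowerGraph_adj_iff {x y : {g : G // g ≠ 1}} :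
    (properPowerGraph G).Adj x y ↔
      x ≠ y ∧ ((x : G) ∈ zpowers (y : G) ∨ (y : G) ∈ zpowers (x : G)) :=
  and_congr_left' Subtype.coe_ne_coe

theorem SimpleGraph.ConnectedComponent.mem_supp_of_mem_zpowers
    {c : (properPowerGraph G).ConnectedComponent} {x y : {g : G // g ≠ 1}} (hy : y ∈ c.supp)
    (hxy : (x : G) ∈ zpowers (y : G)) : x ∈ c.supp := by
  rcases eq_or_ne x y with rfl | hne
  · exact hy
  · exact (c.mem_supp_congr_adj (properPowerGraph_adj_iff.2 ⟨hne, .inl hxy⟩)).2 hy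

namespace SimpleGraph.IsClique

variable {S : Set {g : G // g ≠ 1}}

theorem pairwise_mem_zpowers (hS : (properPowerGraph G).IsClique S) :
    (Subtype.val '' S).Pairwise fun a b => a ∈ zpowers b ∨ b ∈ zpowers a := by
  rintro _ ⟨x, hx, rfl⟩ _ ⟨y, hy, rfl⟩ hne
  exact (properPowerGraph_adj_iff.1 (hS hx hy (ne_of_apply_ne _ hne))).2

theorem mem_zpowers_of_maximalFor (hS : (properPowerGraph G).IsClique S)
    {β : {g : G // g ≠ 1}} (hβ : MaximalFor (· ∈ S) (fun x => zpowers (x : G)) β)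
    {x : {g : G // g ≠ 1}} (hx : x ∈ S) : (x : G) ∈ zpowers (β : G) := by
  rcases eq_or_ne x β with rfl | hne
  · exact mem_zpowers _
  rcases (properPowerGraph_adj_iff.1 (hS hx hβ.1 hne)).2 with h | h
  · exact h
  · exact hβ.2 hx (zpowers_le.2 h) (mem_zpowers _)

end SimpleGraph.IsClique

end PowerGraph

/-- A connected component of the proper power graph that is a clique is of the form
`⟨β⟩ \ {1}` for some element `β` of prime power order. -/
theorem clique_component_eq_zpowers (G : Type*) [Group G] [Finite G]
    (c : (properPowerGraph G).ConnectedComponent)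
    (hc : (properPowerGraph G).IsClique c.supp) :
    ∃ (β : G) (p k : ℕ), p.Prime ∧ orderOf β = p ^ k ∧
      Subtype.val '' c.supp = (Subgroup.zpowers β : Set G) \ {1} := by
  obtain ⟨β, hβ⟩ :=
    c.supp.toFinite.exists_maximalFor (fun x : {g : G // g ≠ 1} => zpowers (x : G)) _
      c.nonempty_supp
  have hsupp : Subtype.val '' c.supp = (zpowers (β : G) : Set G) \ {1} := by
    ext x
    constructor
    · rintro ⟨x, hx, rfl⟩
      exact ⟨hc.mem_zpowers_of_maximalFor hβ hx, x.2⟩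
    · rintro ⟨hx, hx1⟩
      exact ⟨⟨x, hx1⟩, ConnectedComponent.mem_supp_of_mem_zpowers hβ.1 hx, rfl⟩
  obtain ⟨p, k, hp, -, hpk⟩ := (isPrimePow_nat_iff _).1 <|
    isPrimePow_orderOf_of_pairwise_mem_zpowers (isOfFinOrder_of_finite _) β.2
      (hsupp ▸ hc.pairwise_mem_zpowers)
  exact ⟨β, p, k, hp, hpk.symm, hsupp⟩
end

section
/- Let G be a finite group and let g ∈ G have prime order p, where p is maximal under divisibility in the set of element orders of G (i.e., no element of G has order a proper multiple of p). Then ⟨g⟩ \ {1} is a connected component of the proper power graph P*(G). -/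
/-!
A nonidentity element of a group of prime order `p` generates it, so every vertex of
`⟨g⟩ \ {1}` is adjacent to `g`. Conversely, an edge leaving an element `x` of order `p` either
goes into `⟨x⟩` or to some `y` with `x ∈ ⟨y⟩`; in the second case `p ∣ o(y)`, so by maximality
`o(y) = p` and again `⟨y⟩ = ⟨x⟩`. Hence `⟨g⟩ \ {1}` is closed under adjacency.
-/

open Subgroup

namespace SimpleGraph

variable {V : Type*} {Γ : SimpleGraph V}

theorem Reachable.mem_of_adj_closed {S : Set V} (hS : ∀ ⦃x y⦄, Γ.Adj x y → x ∈ S → y ∈ S)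
    {u v : V} (huv : Γ.Reachable u v) (hu : u ∈ S) : v ∈ S := by
  obtain ⟨w⟩ := huv
  induction w with
  | nil => exact hu
  | cons hadj _ ih => exact ih (hS hadj hu)

theorem supp_connectedComponentMk_eq_of_adj_closed {S : Set V} {v : V} (hv : v ∈ S)
    (hS : ∀ ⦃x y⦄, Γ.Adj x y → x ∈ S → y ∈ S) (hreach : ∀ u ∈ S, Γ.Reachable v u) :
    (Γ.connectedComponentMk v).supp = S := by
  ext u
  rw [ConnectedComponent.mem_supp_iff, ConnectedComponent.eq]
  exact ⟨fun h => h.symm.mem_of_adj_closed hS hv, fun hu => (hreach u hu).symm⟩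

end SimpleGraph

section ZpowersOfPrimeOrder

variable {G : Type*} [Group G] {p : ℕ} {x y : G}

theorem zpowers_eq_of_mem_zpowers_of_orderOf_eq (hy : 0 < orderOf y) (hx : x ∈ zpowers y)
    (hxy : orderOf x = orderOf y) : zpowers x = zpowers y := by
  have : Finite (zpowers y) := Nat.finite_of_card_ne_zero (by rw [Nat.card_zpowers]; omega)
  exact eq_of_le_of_card_ge (zpowers_le.2 hx) (by rw [Nat.card_zpowers, Nat.card_zpowers, hxy])

theorem zpowers_eq_of_mem_zpowers_of_orderOf_prime (hp : (orderOf y).Prime)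
    (hx : x ∈ zpowers y) (hx1 : x ≠ 1) : zpowers x = zpowers y := by
  refine zpowers_eq_of_mem_zpowers_of_orderOf_eq hp.pos hx ?_
  exact (hp.eq_one_or_self_of_dvd _ (orderOf_dvd_of_mem_zpowers hx)).resolve_left
    (orderOf_eq_one_iff.not.mpr hx1)

theorem zpowers_eq_of_powerGraph_adj (hp : p.Prime)
    (hmax : ∀ h : G, p ∣ orderOf h → orderOf h = p)
    (hx : orderOf x = p) (hy1 : y ≠ 1) (hadj : (powerGraph G).Adj x y) :
    zpowers y = zpowers x := by
  rcases hadj.2 with hxy | hyx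
  · have hy : orderOf y = p := hmax y (hx ▸ orderOf_dvd_of_mem_zpowers hxy)
    have hx1 : x ≠ 1 := fun h => hp.one_lt.ne' (hx ▸ h ▸ orderOf_one)
    exact (zpowers_eq_of_mem_zpowers_of_orderOf_prime (hy ▸ hp) hxy hx1).symm
  · exact zpowers_eq_of_mem_zpowers_of_orderOf_prime (hx ▸ hp) hyx hy1

theorem properPowerGraph_reachable_of_zpowers_eq {u v : {g : G // g ≠ 1}}
    (h : zpowers (u : G) = zpowers (v : G)) : (properPowerGraph G).Reachable u v := by
  rcases eq_or_ne u v with rfl | hne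
  · rfl
  · exact SimpleGraph.Adj.reachable
      ⟨Subtype.coe_injective.ne hne, Or.inl (h ▸ mem_zpowers (u : G))⟩

end ZpowersOfPrimeOrder

theorem zpowers_sdiff_one_is_component_general (G : Type*) [Group G] (p : ℕ)
    (hp : p.Prime) (g : G) (hg : orderOf g = p)
    (hmax : ∀ h : G, p ∣ orderOf h → orderOf h = p) :
    ∃ c : (properPowerGraph G).ConnectedComponent,
      c.supp = {x : {g' : G // g' ≠ 1} | (x : G) ∈ Subgroup.zpowers g} := by
  have hg1 : g ≠ 1 := fun h => hp.one_lt.ne' (hg ▸ h ▸ orderOf_one)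
  have generates {x : G} (hx : x ∈ zpowers g) (hx1 : x ≠ 1) : zpowers x = zpowers g :=
    zpowers_eq_of_mem_zpowers_of_orderOf_prime (hg ▸ hp) hx hx1
  refine ⟨_, SimpleGraph.supp_connectedComponentMk_eq_of_adj_closed (v := ⟨g, hg1⟩)
    (mem_zpowers g) ?_ ?_⟩
  · rintro ⟨x, hx1⟩ ⟨y, hy1⟩ hadj hx
    have hxg := generates hx hx1
    have hxp : orderOf x = p := by rw [← hg, ← Nat.card_zpowers, hxg, Nat.card_zpowers]
    have hy := zpowers_eq_of_powerGraph_adj hp hmax hxp hy1 hadj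
    exact hxg ▸ hy ▸ mem_zpowers y
  · exact fun u hu => properPowerGraph_reachable_of_zpowers_eq (generates hu u.2).symm

/-- If `g` has prime order `p` maximal under divisibility among element orders,
then `⟨g⟩ \ {1}` is a connected component of the proper power graph. -/
theorem zpowers_sdiff_one_is_component (G : Type*) [Group G] [Finite G] (p : ℕ)
    (hp : p.Prime) (g : G) (hg : orderOf g = p)
    (hmax : ∀ h : G, p ∣ orderOf h → orderOf h = p) :
    ∃ c : (properPowerGraph G).ConnectedComponent,
      c.supp = {x : {g' : G // g' ≠ 1} | (x : G) ∈ Subgroup.zpowers g} :=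
  zpowers_sdiff_one_is_component_general G p hp g hg hmax
end

section
/- Let Γ be a simple graph on n vertices and suppose vertices v₁, …, v_k each have full degree n−1 (adjacent to all other vertices). Then n^k divides det(J + Q), where Q is the Laplacian matrix of Γ and J is the all-ones n×n matrix. -/
open Matrix

theorem Matrix.pow_card_dvd_det_of_dvd_rows {n R : Type*} [Fintype n] [DecidableEq n] [CommRing R]
    (M : Matrix n n R) (c : R) (s : Finset n) (h : ∀ i ∈ s, ∀ j, c ∣ M i j) :
    c ^ s.card ∣ M.det := by
  choose N hN using h
  let N' : Matrix n n R := of fun i j => if hi : i ∈ s then N i hi j else M i j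
  have hM : M = diagonal (fun i => if i ∈ s then c else 1) * N' := by
    ext i j
    by_cases hi : i ∈ s <;> simp [N', hi, hN]
  rw [hM, det_mul, det_diagonal, Finset.prod_ite_mem_eq, Finset.prod_const]
  exact dvd_mul_right _ _

theorem SimpleGraph.allOnes_add_lapMatrix_row_of_isUniversal {V R : Type*} [Fintype V]
    [DecidableEq V] [Ring R] {G : SimpleGraph V} [DecidableRel G.Adj] {v : V}
    (hv : G.IsUniversal v) :
    (of (fun _ _ => (1 : R)) + G.lapMatrix R : Matrix V V R) v =
      Pi.single v (Fintype.card V : R) := by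
  have hdeg := (G.degree_eq_card_sub_one v).mpr hv
  have hcard : 1 ≤ Fintype.card V := Fintype.card_pos_iff.mpr ⟨v⟩
  ext w
  by_cases hw : v = w
  · subst hw
    simp [SimpleGraph.lapMatrix, SimpleGraph.degMatrix, hdeg, Nat.cast_sub hcard]
  · simp [SimpleGraph.lapMatrix, SimpleGraph.degMatrix, hw, Ne.symm hw, hv hw]

/-- If `k` vertices of a simple graph on `n` vertices have full degree `n - 1`,
then `n ^ k` divides `det (J + Q)`, `Q` the Laplacian and `J` the all-ones matrix. -/
theorem pow_card_dvd_det_J_add_lap {V : Type*} [Fintype V] [DecidableEq V]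
    (Γ : SimpleGraph V) [DecidableRel Γ.Adj] (s : Finset V)
    (hs : ∀ v ∈ s, Γ.degree v = Fintype.card V - 1) :
    ((Fintype.card V : ℤ)) ^ s.card ∣
      Matrix.det ((Matrix.of fun _ _ => (1 : ℤ)) + Γ.lapMatrix ℤ) := by
  refine Matrix.pow_card_dvd_det_of_dvd_rows _ _ s fun v hv w => ?_
  rw [Γ.allOnes_add_lapMatrix_row_of_isUniversal ((Γ.degree_eq_card_sub_one v).mp (hs v hv)),
    Pi.single_apply]
  split_ifs <;> simp
end

section
/- Let G be a finite group of order n and let m ∈ μ(G), i.e., m is the order of some element of G and m is maximal under divisibility among element orders. Then n·m^(φ(m)) divides det(J + Q), where Q is the Laplacian of the power graph P(G), J is the n×n all-ones matrix, and φ is Euler's totient function. -/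
noncomputable instance {G : Type*} [Group G] : DecidableRel (powerGraph G).Adj :=
  Classical.decRel _

/-!
Write `M = J + Q`. Its column sums are all `|G|`, and the identity is adjacent to every vertex, so
its row is `|G| • e₁`. If `g` has order `m ∈ μ(G)`, maximality of `m` forces every generator `u` of
`⟨g⟩` to have closed neighbourhood exactly `⟨g⟩`; hence row `u` minus row `g` is `m • (e_u - e_g)`.
If some `x ≠ 1` is not a generator of `⟨g⟩`, replace its row by the sum of all rows and subtract
row `g` from the rows of the other `φ(m) - 1` generators: the determinant is unchanged, and the
rows of `1`, `x` and those generators are divisible by `|G|`, `|G|` and `m`, which gives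
`|G| m ^ φ(m)` since `m ∣ |G|`. Otherwise every vertex is adjacent to all others and `M = |G| • 1`.
-/

open Finset Matrix Subgroup

namespace Matrix

variable {n R : Type*} [Fintype n] [DecidableEq n] [CommRing R]

theorem prod_dvd_det_of_dvd_row (A : Matrix n n R) (s : Finset n) (d : n → R)
    (h : ∀ i ∈ s, ∀ j, d i ∣ A i j) : ∏ i ∈ s, d i ∣ A.det := by
  choose! B hB using h
  obtain ⟨C, hC⟩ : ∃ C : Matrix n n R, A = of fun i j => (if i ∈ s then d i else 1) * C i j := by
    refine ⟨of fun i j => if i ∈ s then B i j else A i j, ?_⟩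
    ext i j
    by_cases hi : i ∈ s <;> simp [hi, hB]
  rw [hC, det_mul_column, prod_ite_mem, univ_inter]
  exact dvd_mul_right _ _

theorem mul_mul_pow_dvd_det (A : Matrix n n R) {a b : n} {T : Finset n} {p q r : R}
    (hab : a ≠ b) (ha : a ∉ T) (hb : b ∉ T) (hpa : ∀ j, p ∣ A a j) (hqb : ∀ j, q ∣ A b j)
    (hrT : ∀ i ∈ T, ∀ j, r ∣ A i j) : p * q * r ^ #T ∣ A.det := by
  have := A.prod_dvd_det_of_dvd_row (insert a (insert b T))
    (fun i => if i = a then p else if i = b then q else r) ?_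
  · rwa [prod_insert (by simp [hab, ha]), prod_insert hb, if_pos rfl, if_neg hab.symm, if_pos rfl,
      prod_congr rfl (g := fun _ => r) (fun i hi => by rw [if_neg (by rintro rfl; exact ha hi),
      if_neg (by rintro rfl; exact hb hi)]), prod_const, ← mul_assoc] at this
  · intro i hi
    rcases mem_insert.1 hi with rfl | hi
    · simpa using hpa
    rcases mem_insert.1 hi with rfl | hi
    · simpa [hab.symm] using hqb
    · simpa [ne_of_mem_of_not_mem hi ha, ne_of_mem_of_not_mem hi hb] using hrT i hi

theorem det_updateRow_const_of_sum_col (A : Matrix n n R) (x : n) {c : R}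
    (h : ∀ j, ∑ i, A i j = c) : (A.updateRow x fun _ => c).det = A.det := by
  have hc : (fun _ => c) = ∑ i, (1 : R) • A i := by
    ext j
    rw [← h j, Finset.sum_apply]
    simp
  simpa [hc] using A.det_updateRow_sum x fun _ => 1

theorem det_of_sub_row_of_notMem (A : Matrix n n R) {T : Finset n} {g : n} (hg : g ∉ T) :
    (of fun i j => if i ∈ T then A i j - A g j else A i j).det = A.det := by
  induction T using Finset.induction_on with
  | empty => rfl
  | insert u T hu ih =>
    have hgT : g ∉ T := fun h => hg (mem_insert_of_mem h)
    have hug : u ≠ g := fun h => hg (h ▸ mem_insert_self u T)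
    rw [← ih hgT, ← det_updateRow_add_smul_self
      (of fun i j => if i ∈ T then A i j - A g j else A i j) hug (-1)]
    congr 1
    ext i j
    by_cases hi : i = u
    · subst hi; simp [hu, hgT, sub_eq_add_neg]
    · simp [hi]

end Matrix

namespace SimpleGraph

variable {V : Type*} (R : Type*) [Fintype V] [DecidableEq V] [CommRing R] (Γ : SimpleGraph V)
  [DecidableRel Γ.Adj]

def onesAddLapMatrix : Matrix V V R := of (fun _ _ => 1) + Γ.lapMatrix R

variable {R}

theorem sum_onesAddLapMatrix_apply (j : V) :
    ∑ i, Γ.onesAddLapMatrix R i j = Fintype.card V := by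
  have hL : ∑ i, Γ.lapMatrix R i j = 0 := by
    simpa [mulVec, dotProduct, (Γ.isSymm_lapMatrix R).apply j]
      using congrFun (Γ.lapMatrix_mulVec_const_eq_zero (R := R)) j
  simp [onesAddLapMatrix, sum_add_distrib, hL]

variable {Γ}

theorem onesAddLapMatrix_apply_of_closedNbhd {v : V} {s : Finset V}
    (hs : ∀ x, x ∈ s ↔ x = v ∨ Γ.Adj v x) (j : V) :
    Γ.onesAddLapMatrix R v j = if j = v then (#s : R) else if j ∈ s then 0 else 1 := by
  have hnbhd : Γ.neighborFinset v = s.erase v := by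
    ext x
    simp only [mem_neighborFinset, mem_erase, hs]
    exact ⟨fun h => ⟨h.ne', Or.inr h⟩, fun h => h.2.resolve_left h.1⟩
  have hdeg : (Γ.degree v : R) + 1 = #s := by
    rw [← card_neighborFinset_eq_degree, hnbhd, ← card_erase_add_one ((hs v).2 (Or.inl rfl)), Nat.cast_succ]
  simp only [onesAddLapMatrix, lapMatrix, degMatrix, Matrix.add_apply, Matrix.sub_apply, of_apply,
    diagonal_apply, adjMatrix_apply, hs]
  by_cases hjv : j = v
  · subst hjv
    simp [← hdeg, add_comm]
  · by_cases hadj : Γ.Adj v j <;> simp [hjv, Ne.symm hjv, hadj]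

theorem card_dvd_onesAddLapMatrix_sub {u w : V} {s : Finset V}
    (hu : ∀ x, x ∈ s ↔ x = u ∨ Γ.Adj u x) (hw : ∀ x, x ∈ s ↔ x = w ∨ Γ.Adj w x) (j : V) :
    (#s : R) ∣ Γ.onesAddLapMatrix R u j - Γ.onesAddLapMatrix R w j := by
  rw [onesAddLapMatrix_apply_of_closedNbhd hu, onesAddLapMatrix_apply_of_closedNbhd hw]
  have hus : u ∈ s := (hu u).2 (Or.inl rfl)
  have hws : w ∈ s := (hw w).2 (Or.inl rfl)
  split_ifs <;> subst_vars <;> simp_all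

theorem card_dvd_onesAddLapMatrix_apply {v : V} (hv : ∀ x, x = v ∨ Γ.Adj v x) (j : V) :
    (Fintype.card V : R) ∣ Γ.onesAddLapMatrix R v j := by
  rw [onesAddLapMatrix_apply_of_closedNbhd (s := univ) (by simpa using hv)]
  simp only [mem_univ, if_true, card_univ]
  split_ifs <;> simp

end SimpleGraph

section PowerGraph

variable {G : Type*} [Group G]

theorem eq_one_or_powerGraph_adj_one (x : G) : x = 1 ∨ (powerGraph G).Adj 1 x := by
  rcases eq_or_ne x 1 with rfl | hx
  · exact Or.inl rfl
  · exact Or.inr ⟨hx.symm, Or.inl (one_mem _)⟩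

theorem zpowers_eq_of_zpowers_le [Finite G] {g x : G}
    (hmax : ∀ h : G, orderOf g ∣ orderOf h → orderOf h = orderOf g)
    (hle : zpowers g ≤ zpowers x) : zpowers x = zpowers g := by
  have hx : orderOf x = orderOf g :=
    hmax x (orderOf_dvd_of_mem_zpowers (zpowers_le.1 hle))
  exact (eq_of_le_of_card_ge hle (by rw [Nat.card_zpowers, Nat.card_zpowers, hx])).symm

theorem mem_zpowers_iff_eq_or_powerGraph_adj [Finite G] {g u : G}
    (hmax : ∀ h : G, orderOf g ∣ orderOf h → orderOf h = orderOf g)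
    (hu : zpowers u = zpowers g) (x : G) :
    x ∈ zpowers g ↔ x = u ∨ (powerGraph G).Adj u x := by
  rw [← hu]
  constructor
  · intro hx
    rcases eq_or_ne x u with rfl | hne
    · exact Or.inl rfl
    · exact Or.inr ⟨hne.symm, Or.inr hx⟩
  · rintro (rfl | ⟨-, hux | hx⟩)
    · exact mem_zpowers x
    · rw [hu, ← zpowers_eq_of_zpowers_le hmax (hu ▸ zpowers_le.2 hux)]
      exact mem_zpowers x
    · exact hx

theorem card_zpowers_eq_zpowers_eq_totient [Finite G] (g : G) :
    Nat.card {u : G // zpowers u = zpowers g} = (orderOf g).totient := by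
  have := Fintype.ofFinite G
  have e : {u : G // zpowers u = zpowers g} ≃ {a : zpowers g // orderOf a = orderOf g} :=
    { toFun := fun u => ⟨⟨u, u.2.le (mem_zpowers _)⟩, by
        rw [Subgroup.orderOf_mk, ← Nat.card_zpowers, u.2, Nat.card_zpowers]⟩
      invFun := fun a => ⟨a, eq_of_le_of_card_ge (zpowers_le.2 a.1.2) (by
        rw [Nat.card_zpowers, Nat.card_zpowers, Subgroup.orderOf_coe, a.2])⟩
      left_inv := fun u => rfl
      right_inv := fun a => rfl }
  rw [Nat.card_congr e, Nat.card_eq_fintype_card, Fintype.card_subtype,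
    IsCyclic.card_orderOf_eq_totient (by rw [Fintype.card_zpowers])]

theorem eq_or_powerGraph_adj_of_forall_zpowers_eq {g : G}
    (hall : ∀ x ≠ 1, zpowers x = zpowers g) (v x : G) : x = v ∨ (powerGraph G).Adj v x := by
  rcases eq_or_ne v 1 with rfl | hv
  · exact eq_one_or_powerGraph_adj_one x
  rcases eq_or_ne x 1 with rfl | hx
  · exact Or.inr ((eq_one_or_powerGraph_adj_one v).resolve_left hv).symm
  rcases eq_or_ne x v with rfl | hxv
  · exact Or.inl rfl
  · exact Or.inr ⟨hxv.symm, Or.inr (by rw [hall v hv, ← hall x hx]; exact mem_zpowers x)⟩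

variable [Fintype G] [DecidableEq G] {R : Type*} [CommRing R]

theorem orderOf_dvd_onesAddLapMatrix_sub {g u : G}
    (hmax : ∀ h : G, orderOf g ∣ orderOf h → orderOf h = orderOf g)
    (hu : zpowers u = zpowers g) (j : G) :
    (orderOf g : R) ∣
      (powerGraph G).onesAddLapMatrix R u j - (powerGraph G).onesAddLapMatrix R g j := by
  have hnbhd : ∀ v, zpowers v = zpowers g →
      ∀ x, x ∈ ({x | x ∈ zpowers g} : Finset G) ↔ x = v ∨ (powerGraph G).Adj v x :=
    fun v hv x => by simpa using mem_zpowers_iff_eq_or_powerGraph_adj hmax hv x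
  have hcard : #{x | x ∈ zpowers g} = orderOf g := by
    rw [← Fintype.card_subtype, Fintype.card_zpowers]
  simpa [hcard] using SimpleGraph.card_dvd_onesAddLapMatrix_sub (hnbhd u hu) (hnbhd g rfl) j

theorem card_mul_pow_dvd_det_onesAddLapMatrix {g : G}
    (hmax : ∀ h : G, orderOf g ∣ orderOf h → orderOf h = orderOf g)
    (hg : g ≠ 1) {S : Finset G} (hgS : g ∈ S) (hS : ∀ u ∈ S, zpowers u = zpowers g) :
    (Fintype.card G : R) * (orderOf g : R) ^ #S ∣ ((powerGraph G).onesAddLapMatrix R).det := by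
  set M := (powerGraph G).onesAddLapMatrix R
  set T := S.erase g
  have hm : (orderOf g : R) ∣ Fintype.card G := Nat.cast_dvd_cast orderOf_dvd_card
  have hrow_one : ∀ j, (Fintype.card G : R) ∣ M 1 j :=
    SimpleGraph.card_dvd_onesAddLapMatrix_apply eq_one_or_powerGraph_adj_one
  have hone : 1 ∉ T := fun h1 =>
    hg (zpowers_eq_bot.1 ((hS 1 (mem_of_mem_erase h1)).symm.trans zpowers_one_eq_bot))
  rw [← card_erase_add_one hgS, pow_succ', ← mul_assoc]
  by_cases hx : ∃ x, x ≠ 1 ∧ zpowers x ≠ zpowers g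
  · obtain ⟨x, hx1, hxg⟩ := hx
    have hxT : x ∉ T := fun h => hxg (hS x (mem_of_mem_erase h))
    have hgx : g ≠ x := by rintro rfl; exact hxg rfl
    rw [← det_updateRow_const_of_sum_col M x (powerGraph G).sum_onesAddLapMatrix_apply,
      ← det_of_sub_row_of_notMem (T := T) _ (notMem_erase g S)]
    refine (mul_dvd_mul_right (mul_dvd_mul_left _ hm) _).trans
      (mul_mul_pow_dvd_det _ hx1.symm hone hxT ?_ ?_ ?_)
    · simpa [hone, hx1.symm] using hrow_one
    · simp [hxT]
    · intro u hu j
      rw [of_apply, if_pos hu, updateRow_ne (ne_of_mem_of_not_mem hu hxT), updateRow_ne hgx]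
      exact orderOf_dvd_onesAddLapMatrix_sub hmax (hS u (mem_of_mem_erase hu)) j
  · push Not at hx
    have hdom := eq_or_powerGraph_adj_of_forall_zpowers_eq hx
    exact mul_mul_pow_dvd_det M hg.symm hone (notMem_erase g S) hrow_one
      (fun j => hm.trans (SimpleGraph.card_dvd_onesAddLapMatrix_apply (hdom g) j))
      (fun u _ j => hm.trans (SimpleGraph.card_dvd_onesAddLapMatrix_apply (hdom u) j))

end PowerGraph

/-- If `m ∈ μ(G)` (an element order maximal under divisibility), then
`|G| * m ^ φ(m)` divides `det (J + Q)` for the power graph of `G`. -/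
theorem card_mul_pow_totient_dvd_det (G : Type*) [Group G] [Fintype G] [DecidableEq G]
    (m : ℕ) (hex : ∃ g : G, orderOf g = m)
    (hmax : ∀ h : G, m ∣ orderOf h → orderOf h = m) :
    ((Fintype.card G : ℤ) * (m : ℤ) ^ m.totient) ∣
      Matrix.det ((Matrix.of fun _ _ => (1 : ℤ)) + (powerGraph G).lapMatrix ℤ) := by
  classical
  show _ ∣ ((powerGraph G).onesAddLapMatrix ℤ).det
  obtain ⟨g, rfl⟩ := hex
  obtain rfl | hg := eq_or_ne g 1
  · simpa using prod_dvd_det_of_dvd_row ((powerGraph G).onesAddLapMatrix ℤ) {1}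
      (fun _ => (Fintype.card G : ℤ)) fun i hi => by
        rw [mem_singleton.1 hi]
        exact SimpleGraph.card_dvd_onesAddLapMatrix_apply eq_one_or_powerGraph_adj_one
  · have hS : #{u | zpowers u = zpowers g} = (orderOf g).totient := by
      rw [← card_zpowers_eq_zpowers_eq_totient, Nat.card_eq_fintype_card, Fintype.card_subtype]
    rw [← hS]
    exact card_mul_pow_dvd_det_onesAddLapMatrix hmax hg (by simp) (by simp)
end

section
/- Let G be a finite nonabelian simple group and p a prime dividing |G|. Then G has at least p² − 1 elements of order p; equivalently, G has at least p + 1 distinct cyclic subgroups of order p. -/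
namespace Equiv.Perm.VectorsProdEqOne

variable {G : Type*} [Group G] {n : ℕ}

def rotateOne : Function.End (vectorsProdEqOne G n) := fun v => rotate v 1

theorem rotateOne_pow_apply (k : ℕ) (v : vectorsProdEqOne G n) :
    (rotateOne ^ k) v = rotate v k := by
  induction k generalizing v with
  | zero => exact (rotate_zero v).symm
  | succ k ih =>
    calc (rotateOne ^ (k + 1)) v = (rotateOne ^ k) (rotate v 1) := by rw [pow_succ]; rfl
      _ = rotate v (k + 1) := by rw [ih, rotate_rotate, Nat.add_comm]

theorem rotateOne_pow_self : (rotateOne : Function.End (vectorsProdEqOne G n)) ^ n = 1 :=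
  funext fun v => (rotateOne_pow_apply n v).trans (rotate_length v)

noncomputable def replicateFixedPoints (hn : n ≠ 0) :
    {x : G // x ^ n = 1} ≃
      Function.fixedPoints (rotateOne : Function.End (vectorsProdEqOne G n)) :=
  Equiv.ofBijective
    (fun x => ⟨⟨List.Vector.replicate n x.1, (List.prod_replicate n x.1).trans x.2⟩,
      Subtype.ext (Subtype.ext (List.rotate_replicate x.1 n 1))⟩)
    ⟨fun x y hxy => Subtype.ext (List.replicate_right_injective hn
        (congrArg (fun v => v.1.1.1) hxy)),
     fun ⟨⟨⟨l, hl⟩, hprod⟩, hfix⟩ => by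
      obtain ⟨a, ha⟩ := List.rotate_one_eq_self_iff_eq_replicate.mp
        (congrArg (fun v : vectorsProdEqOne G n => v.1.1) hfix)
      obtain rfl : l = List.replicate n a := ha.trans (congrArg (List.replicate · a) hl)
      exact ⟨⟨a, (List.prod_replicate _ a).symm.trans hprod⟩, rfl⟩⟩

end Equiv.Perm.VectorsProdEqOne

section

variable {G : Type*} [Group G]

open Equiv.Perm VectorsProdEqOne in
theorem Nat.Prime.dvd_card_pow_eq_one [Finite G] {p : ℕ} (hp : p.Prime)
    (hdvd : p ∣ Nat.card G) : p ∣ Nat.card {x : G // x ^ p = 1} := by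
  classical
  have := Fintype.ofFinite G
  have : Fact p.Prime := ⟨hp⟩
  have hmod := card_fixedPoints_modEq (f := (rotateOne : Function.End (vectorsProdEqOne G p)))
    (n := 1) (by rw [pow_one]; exact rotateOne_pow_self)
  rw [VectorsProdEqOne.card, Fintype.card_eq_nat_card, Fintype.card_eq_nat_card,
    ← Nat.card_congr (replicateFixedPoints hp.ne_zero)] at hmod
  have hdvd_pow : p ∣ Nat.card G ^ (p - 1) := dvd_pow hdvd (Nat.sub_ne_zero_of_lt hp.one_lt)
  exact Nat.modEq_zero_iff_dvd.mp (hmod.symm.trans (Nat.modEq_zero_iff_dvd.mpr hdvd_pow))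

theorem Subgroup.zpowers_eq_iff_of_prime_card {H : Subgroup G} (hH : (Nat.card H).Prime)
    {g : G} : Subgroup.zpowers g = H ↔ g ∈ H ∧ g ≠ 1 := by
  have : Finite H := Nat.finite_of_card_ne_zero hH.ne_zero
  constructor
  · rintro rfl
    refine ⟨Subgroup.mem_zpowers g, fun h1 => hH.ne_one ?_⟩
    rw [h1, Subgroup.zpowers_one_eq_bot, Subgroup.card_bot]
  · rintro ⟨hg, hg1⟩
    refine Subgroup.eq_of_le_of_card_ge (Subgroup.zpowers_le.mpr hg) (le_of_eq ?_)
    rw [Nat.card_zpowers]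
    exact (((Nat.dvd_prime hH).mp (Subgroup.orderOf_dvd_natCard H hg)).resolve_left
      (mt orderOf_eq_one_iff.mp hg1)).symm

theorem Subgroup.card_zpowers_preimage_of_prime_card {H : Subgroup G}
    (hH : (Nat.card H).Prime) : Nat.card {g : G // Subgroup.zpowers g = H} = Nat.card H - 1 := by
  rw [Nat.card_congr (Equiv.subtypeEquivRight fun g => Subgroup.zpowers_eq_iff_of_prime_card hH)]
  exact (Set.ncard_sdiff_singleton_of_mem H.one_mem).trans (by rw [← Nat.card_coe_set_eq]; rfl)

theorem card_orderOf_eq_prime [Finite G] {p : ℕ} (hp : p.Prime) :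
    Nat.card {g : G // orderOf g = p} = Nat.card {H : Subgroup G // Nat.card H = p} * (p - 1) := by
  have := Fintype.ofFinite {H : Subgroup G // Nat.card H = p}
  let φ (g : {g : G // orderOf g = p}) : {H : Subgroup G // Nat.card H = p} :=
    ⟨Subgroup.zpowers g, by rw [Nat.card_zpowers, g.2]⟩
  have hfiber (H : {H : Subgroup G // Nat.card H = p}) : Nat.card {g // φ g = H} = p - 1 := by
    obtain ⟨H, rfl⟩ := H
    rw [← Subgroup.card_zpowers_preimage_of_prime_card hp]
    refine Nat.card_congr <| (Equiv.subtypeEquivRight fun g => Subtype.ext_iff).trans <|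
      (Equiv.subtypeSubtypeEquivSubtypeInter _ (Subgroup.zpowers · = H)).trans <|
      Equiv.subtypeEquivRight fun g => and_iff_right_of_imp fun hg => ?_
    rw [← Nat.card_zpowers, hg]
  rw [Nat.card_congr (Equiv.sigmaFiberEquiv φ).symm, Nat.card_sigma,
    Finset.sum_congr rfl fun H _ => hfiber H, Finset.sum_const, Finset.card_univ, smul_eq_mul,
    Nat.card_eq_fintype_card]

theorem Subgroup.characteristic_of_forall_card_eq {H : Subgroup G}
    (h : ∀ K : Subgroup G, Nat.card K = Nat.card H → K = H) : H.Characteristic :=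
  characteristic_iff_map_eq.mpr fun ϕ => h _ (card_map_of_injective ϕ.injective)

theorem IsSimpleGroup.isCyclic_of_normal_of_prime_card [IsSimpleGroup G] {H : Subgroup G}
    [hN : H.Normal] (hH : (Nat.card H).Prime) : IsCyclic G := by
  obtain rfl | rfl := hN.eq_bot_or_eq_top
  · exact absurd (Subgroup.card_bot (G := G) ▸ hH) Nat.not_prime_one
  · have : Fact (Nat.card G).Prime := ⟨Subgroup.card_top (G := G) ▸ hH⟩
    exact isCyclic_of_prime_card rfl

theorem card_pow_eq_one_of_prime [Finite G] {p : ℕ} (hp : p.Prime) :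
    Nat.card {x : G // x ^ p = 1} = Nat.card {g : G // orderOf g = p} + 1 := by
  have hset : {x : G | x ^ p = 1} = insert 1 {g | orderOf g = p} := by
    ext x
    simp [← orderOf_dvd_iff_pow_eq_one, Nat.dvd_prime hp]
  have h1 : (1 : G) ∉ {g : G | orderOf g = p} := by simpa using hp.ne_one.symm
  calc Nat.card {x : G // x ^ p = 1} = {x : G | x ^ p = 1}.ncard := Nat.card_coe_set_eq _
    _ = {g : G | orderOf g = p}.ncard + 1 := by rw [hset, Set.ncard_insert_of_notMem h1]
    _ = _ := by rw [← Nat.card_coe_set_eq]; rfl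

theorem card_subgroups_of_card_eq_prime_modEq_one [Finite G] {p : ℕ}
    (hp : p.Prime) (hdvd : p ∣ Nat.card G) :
    Nat.card {H : Subgroup G // Nat.card H = p} ≡ 1 [MOD p] := by
  have h := hp.dvd_card_pow_eq_one hdvd
  rw [card_pow_eq_one_of_prime hp, card_orderOf_eq_prime hp, ← ZMod.natCast_eq_zero_iff] at h
  rw [← ZMod.natCast_eq_natCast_iff]
  push_cast [Nat.cast_sub hp.one_le, ZMod.natCast_self] at h ⊢
  linear_combination -h

theorem IsSimpleGroup.one_lt_card_subgroups_of_card_eq_prime [Finite G] [IsSimpleGroup G]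
    (hG : ¬IsCyclic G) {p : ℕ} (hp : p.Prime) (hdvd : p ∣ Nat.card G) :
    1 < Nat.card {H : Subgroup G // Nat.card H = p} := by
  have : Fact p.Prime := ⟨hp⟩
  obtain ⟨x, hx⟩ := exists_prime_orderOf_dvd_card' p hdvd
  have hx : Nat.card (Subgroup.zpowers x) = p := by rw [Nat.card_zpowers, hx]
  have : Nonempty {H : Subgroup G // Nat.card H = p} := ⟨⟨_, hx⟩⟩
  refine lt_of_le_of_ne Nat.card_pos fun hunique => hG ?_
  have : (Subgroup.zpowers x).Characteristic :=
    Subgroup.characteristic_of_forall_card_eq fun K hK => congrArg Subtype.val <|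
      (Nat.card_eq_one_iff_unique.mp hunique.symm).1.elim ⟨K, hK.trans hx⟩ ⟨_, hx⟩
  exact IsSimpleGroup.isCyclic_of_normal_of_prime_card (hx ▸ hp)

end

/-- A finite nonabelian simple group has at least `p² − 1` elements of order `p`,
equivalently at least `p + 1` cyclic subgroups of order `p`, for every prime
divisor `p` of its order. -/
theorem simple_group_elements_of_order_p (G : Type*) [Group G] [Finite G]
    [IsSimpleGroup G] (hna : ∃ a b : G, a * b ≠ b * a)
    (p : ℕ) (hp : p.Prime) (hdvd : p ∣ Nat.card G) :
    p ^ 2 - 1 ≤ Nat.card {g : G // orderOf g = p} ∧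
      p + 1 ≤ Nat.card {H : Subgroup G // Nat.card H = p} := by
  have hG : ¬IsCyclic G := fun _ => hna.elim fun a ⟨b, hab⟩ => hab (mul_comm' a b)
  have hmod := card_subgroups_of_card_eq_prime_modEq_one hp hdvd
  have hk := IsSimpleGroup.one_lt_card_subgroups_of_card_eq_prime hG hp hdvd
  have hsubgroups : p + 1 ≤ Nat.card {H : Subgroup G // Nat.card H = p} := by
    have := Nat.le_of_dvd (by omega) ((Nat.modEq_iff_dvd' hk.le).mp hmod.symm)
    omega
  refine ⟨?_, hsubgroups⟩
  calc p ^ 2 - 1 = (p + 1) * (p - 1) := by rw [← Nat.sq_sub_sq, one_pow]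
    _ ≤ Nat.card {H : Subgroup G // Nat.card H = p} * (p - 1) := Nat.mul_le_mul_right _ hsubgroups
    _ = Nat.card {g : G // orderOf g = p} := (card_orderOf_eq_prime hp).symm
end

section
/- Let G be a finite group and p the smallest prime such that κ(G) < p^(p−2). Then every prime divisor of |G| divides (p−1)!. -/
/-!
If a prime `q ≥ p` divided `|G|`, an element `x` of order `q` would span a clique
`{1, x, …, x^(q-1)}` of the power graph, in which `1` is moreover adjacent to every vertex.
Every labelled tree on `p` of these vertices, completed by joining all remaining vertices to `1`,
is then a spanning tree of `P(G)`, so Cayley's formula gives `κ(G) ≥ p^(p-2)`, a contradiction.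
Hence every prime divisor of `|G|` is below `p` and divides `(p-1)!`.

Only the lower bound of Cayley's formula is needed. It comes from decoding Prüfer sequences into
parent maps of trees rooted at a fixed vertex, and showing that the decoding is injective.
-/

open Finset Function

def parentGraph {V : Type*} (P : V → V) : SimpleGraph V :=
  SimpleGraph.fromRel fun x y => P x = y

structure IsParentMap {V : Type*} (P : V → V) (r : V) (d : V → ℕ) : Prop where
  map_root : P r = r
  depth_lt : ∀ v, v ≠ r → d (P v) < d v

namespace IsParentMap

variable {V : Type*} {P : V → V} {r : V} {d : V → ℕ}

theorem reachable (h : IsParentMap P r d) (v : V) : (parentGraph P).Reachable v r := by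
  induction hv : d v using Nat.strong_induction_on generalizing v with
  | _ k ih =>
    by_cases hvr : v = r
    · rw [hvr]
    have hlt := h.depth_lt v hvr
    have hadj : (parentGraph P).Adj v (P v) :=
      (SimpleGraph.fromRel_adj _ _ _).mpr ⟨fun e => by rw [← e] at hlt; omega, Or.inl rfl⟩
    exact hadj.reachable.trans (ih _ (hv ▸ hlt) _ rfl)

theorem connected (h : IsParentMap P r d) : (parentGraph P).Connected :=
  (SimpleGraph.connected_iff _).mpr
    ⟨fun u v => (h.reachable u).trans (h.reachable v).symm, ⟨r⟩⟩

theorem card_edgeFinset_le [Fintype V] [DecidableEq V] [DecidableRel (parentGraph P).Adj]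
    (h : IsParentMap P r d) : (parentGraph P).edgeFinset.card + 1 ≤ Fintype.card V := by
  have hsub : (parentGraph P).edgeFinset ⊆ (univ.erase r).image fun v => s(v, P v) := by
    rintro ⟨x, y⟩ he
    rw [SimpleGraph.mem_edgeFinset, SimpleGraph.mem_edgeSet, parentGraph,
      SimpleGraph.fromRel_adj] at he
    obtain ⟨hxy, rfl | rfl⟩ := he
    · refine mem_image.mpr ⟨x, mem_erase.mpr ⟨?_, mem_univ _⟩, rfl⟩
      rintro rfl
      exact hxy h.map_root.symm
    · refine mem_image.mpr ⟨y, mem_erase.mpr ⟨?_, mem_univ _⟩, Sym2.eq_swap⟩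
      rintro rfl
      exact hxy h.map_root
  have := (card_le_card hsub).trans card_image_le
  rw [card_erase_of_mem (mem_univ _), card_univ] at this
  have := Fintype.card_pos_iff.mpr ⟨r⟩
  omega

-- A spanning tree of `parentGraph P` has at least as many edges as `parentGraph P`, so it is all
-- of it.
theorem isTree [Finite V] (h : IsParentMap P r d) : (parentGraph P).IsTree := by
  classical
  have := Fintype.ofFinite V
  obtain ⟨T, hle, hT⟩ := h.connected.exists_isTree_le
  suffices T = parentGraph P from this ▸ hT
  rw [← SimpleGraph.edgeFinset_inj]
  apply eq_of_subset_of_card_le (SimpleGraph.edgeFinset_subset_edgeFinset.mpr hle)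
  have := h.card_edgeFinset_le
  have := hT.card_edgeFinset
  omega

theorem eq_of_le {P' : V → V} (h : IsParentMap P r d) (hr' : P' r = r)
    (hle : parentGraph P ≤ parentGraph P') : P = P' := by
  funext v
  induction hv : d v using Nat.strong_induction_on generalizing v with
  | _ k ih =>
    by_cases hvr : v = r
    · rw [hvr, h.map_root, hr']
    have hlt := h.depth_lt v hvr
    have hadj : (parentGraph P).Adj v (P v) :=
      (SimpleGraph.fromRel_adj _ _ _).mpr ⟨fun e => by rw [← e] at hlt; omega, Or.inl rfl⟩
    obtain ⟨-, hP' | hP'⟩ := (SimpleGraph.fromRel_adj _ _ _).mp (hle hadj)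
    · exact hP'.symm
    · exfalso
      have hPv : P v ≠ r := fun e => hvr (by rw [← hP', e, hr'])
      have := h.depth_lt _ hPv
      rw [ih _ (hv ▸ hlt) _ rfl, hP'] at this
      omega

theorem extend {ι : Type*} {P : ι → ι} {r : ι} {d : ι → ℕ} (h : IsParentMap P r d)
    {e : ι → V} (he : Injective e) (k : ι) :
    IsParentMap (extend e (e ∘ P) fun _ => e k) (e r) (extend e d fun _ => d k + 1) where
  map_root := by rw [he.extend_apply, comp_apply, h.map_root]
  depth_lt v hv := by
    by_cases hve : ∃ i, e i = v
    · obtain ⟨i, rfl⟩ := hve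
      rw [he.extend_apply, comp_apply, he.extend_apply, he.extend_apply]
      exact h.depth_lt i fun hi => hv (hi ▸ rfl)
    · rw [extend_apply' _ _ _ hve, he.extend_apply, extend_apply' _ _ _ hve]
      exact Nat.lt_succ_self _

end IsParentMap

namespace Prufer

variable {n : ℕ} (f : Fin n → Fin (n + 2))

/- Prüfer decoding with root `Fin.last (n + 1)`: at step `i ≤ n`, `leaf f i` is the least vertex
that is neither the root, nor removed earlier, nor still occurring in the code from position `i`
on, and its parent is `seq f i`. Padding the code with the root gives the last leaf `leaf f n` and
the root itself the root as parent. -/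
def seq (k : ℕ) : Fin (n + 2) :=
  if h : k < n then f ⟨k, h⟩ else Fin.last (n + 1)

def blocked (i : ℕ) (R : Finset (Fin (n + 2))) : Finset (Fin (n + 2)) :=
  insert (Fin.last (n + 1)) (R ∪ (Ico i n).image (seq f))

def next (i : ℕ) (R : Finset (Fin (n + 2))) : Fin (n + 2) :=
  if h : (blocked f i R)ᶜ.Nonempty then (blocked f i R)ᶜ.min' h else Fin.last (n + 1)

def removed : ℕ → Finset (Fin (n + 2))
  | 0 => ∅
  | i + 1 => insert (next f i (removed i)) (removed i)

def leaf (i : ℕ) : Fin (n + 2) := next f i (removed f i)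

open scoped Classical in
noncomputable def rank (v : Fin (n + 2)) : ℕ :=
  if h : ∃ j ≤ n, leaf f j = v then Nat.find h else n + 1

noncomputable def parent (v : Fin (n + 2)) : Fin (n + 2) := seq f (rank f v)

lemma removed_eq_image (i : ℕ) : removed f i = (range i).image (leaf f) := by
  induction i with
  | zero => rfl
  | succ i ih => rw [range_add_one, image_insert, ← ih]; rfl

lemma card_removed_le (i : ℕ) : (removed f i).card ≤ i := by
  rw [removed_eq_image]
  exact card_image_le.trans (card_range i).le

lemma seq_of_le {k : ℕ} (hk : n ≤ k) : seq f k = Fin.last (n + 1) := dif_neg (by omega)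

lemma compl_blocked_nonempty {i : ℕ} (hi : i ≤ n) :
    (blocked f i (removed f i))ᶜ.Nonempty := by
  have hcard : (blocked f i (removed f i)).card ≤ n + 1 := calc
    _ ≤ (removed f i ∪ (Ico i n).image (seq f)).card + 1 := card_insert_le _ _
    _ ≤ (removed f i).card + ((Ico i n).image (seq f)).card + 1 := by
        gcongr
        exact card_union_le _ _
    _ ≤ i + (n - i) + 1 := by
        gcongr
        · exact card_removed_le f i
        · exact card_image_le.trans (Nat.card_Ico i n).le
    _ = n + 1 := by omega
  rw [← card_pos, card_compl, Fintype.card_fin]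
  omega

lemma leaf_notMem_blocked {i : ℕ} (hi : i ≤ n) : leaf f i ∉ blocked f i (removed f i) := by
  rw [leaf, next, dif_pos (compl_blocked_nonempty f hi)]
  exact mem_compl.mp (min'_mem _ _)

lemma leaf_ne_last {i : ℕ} (hi : i ≤ n) : leaf f i ≠ Fin.last (n + 1) :=
  fun h => leaf_notMem_blocked f hi (h ▸ mem_insert_self _ _)

lemma leaf_notMem_removed {i : ℕ} (hi : i ≤ n) : leaf f i ∉ removed f i :=
  fun h => leaf_notMem_blocked f hi (mem_insert_of_mem (mem_union_left _ h))

lemma leaf_ne_seq {i k : ℕ} (hi : i ≤ k) (hk : k < n) : leaf f i ≠ seq f k :=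
  fun h => leaf_notMem_blocked f (hi.trans hk.le)
    (mem_insert_of_mem (mem_union_right _ (h ▸ mem_image_of_mem _ (mem_Ico.mpr ⟨hi, hk⟩))))

lemma leaf_injOn : Set.InjOn (leaf f) (Set.Iic n) := by
  have key : ∀ {i j}, i ≤ n → j < i → leaf f j ≠ leaf f i := fun hi hji h =>
    leaf_notMem_removed f hi
      (h ▸ removed_eq_image f _ ▸ mem_image_of_mem _ (mem_range.mpr hji))
  intro i hi j hj h
  rcases lt_trichotomy i j with hij | rfl | hij
  · exact absurd h (key hj hij)
  · rfl
  · exact absurd h.symm (key hi hij)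

lemma exists_leaf_eq {v : Fin (n + 2)} (hv : v ≠ Fin.last (n + 1)) :
    ∃ i ≤ n, leaf f i = v := by
  have himage : (range (n + 1)).image (leaf f) = univ.erase (Fin.last (n + 1)) := by
    refine eq_of_subset_of_card_le (fun w hw => ?_) ?_
    · obtain ⟨j, hj, rfl⟩ := mem_image.mp hw
      exact mem_erase.mpr ⟨leaf_ne_last f (Nat.lt_succ_iff.mp (mem_range.mp hj)), mem_univ _⟩
    · rw [card_erase_of_mem (mem_univ _), card_univ, Fintype.card_fin, card_image_of_injOn
        fun i hi j hj => leaf_injOn f (Nat.lt_succ_iff.mp (mem_range.mp hi))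
          (Nat.lt_succ_iff.mp (mem_range.mp hj)), card_range]
      omega
  obtain ⟨i, hi, rfl⟩ := mem_image.mp (himage ▸ mem_erase.mpr ⟨hv, mem_univ v⟩)
  exact ⟨i, Nat.lt_succ_iff.mp (mem_range.mp hi), rfl⟩

lemma rank_leaf {i : ℕ} (hi : i ≤ n) : rank f (leaf f i) = i := by
  classical
  have hex : ∃ j ≤ n, leaf f j = leaf f i := ⟨i, hi, rfl⟩
  rw [rank, dif_pos hex]
  exact leaf_injOn f (Nat.find_spec hex).1 hi (Nat.find_spec hex).2

lemma rank_last : rank f (Fin.last (n + 1)) = n + 1 := by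
  rw [rank, dif_neg]
  rintro ⟨j, hj, h⟩
  exact leaf_ne_last f hj h

lemma rank_le (v : Fin (n + 2)) : rank f v ≤ n + 1 := by
  by_cases hv : v = Fin.last (n + 1)
  · rw [hv, rank_last]
  · obtain ⟨i, hi, rfl⟩ := exists_leaf_eq f hv
    rw [rank_leaf f hi]
    omega

lemma parent_leaf {i : ℕ} (hi : i ≤ n) : parent f (leaf f i) = seq f i := by
  rw [parent, rank_leaf f hi]

lemma parent_last : parent f (Fin.last (n + 1)) = Fin.last (n + 1) := by
  rw [parent, rank_last, seq_of_le f (by omega)]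

lemma rank_lt_rank_parent {v : Fin (n + 2)} (hv : v ≠ Fin.last (n + 1)) :
    rank f v < rank f (parent f v) := by
  obtain ⟨i, hi, rfl⟩ := exists_leaf_eq f hv
  rw [parent_leaf f hi, rank_leaf f hi]
  by_cases hs : seq f i = Fin.last (n + 1)
  · rw [hs, rank_last]
    omega
  · obtain ⟨j, hj, hji⟩ := exists_leaf_eq f hs
    have hin : i < n := by_contra fun h => hs (seq_of_le f (by omega))
    rw [← hji, rank_leaf f hj]
    by_contra! hle
    exact leaf_ne_seq f hle hin hji

theorem isParentMap_parent :
    IsParentMap (parent f) (Fin.last (n + 1)) fun v => n + 1 - rank f v where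
  map_root := parent_last f
  depth_lt v hv := by
    have := rank_lt_rank_parent f hv
    have := rank_le f (parent f v)
    omega

-- The vertices still occurring in the code are the parents of the vertices not yet removed, so
-- each decoding step can be replayed from the parent map alone.
lemma mem_image_seq_iff {i : ℕ} {v : Fin (n + 2)} (hv : v ≠ Fin.last (n + 1))
    (hvR : v ∉ removed f i) :
    v ∈ (Ico i n).image (seq f) ↔ ∃ w ∉ removed f i, parent f w = v := by
  constructor
  · rintro h
    obtain ⟨k, hk, rfl⟩ := mem_image.mp h
    obtain ⟨hik, hkn⟩ := mem_Ico.mp hk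
    refine ⟨leaf f k, fun hmem => ?_, parent_leaf f hkn.le⟩
    obtain ⟨j, hj, hjk⟩ := mem_image.mp (removed_eq_image f i ▸ hmem)
    have := leaf_injOn f (Set.mem_Iic.mpr (by have := mem_range.mp hj; omega))
      (Set.mem_Iic.mpr hkn.le) hjk
    have := mem_range.mp hj
    omega
  · rintro ⟨w, hwR, rfl⟩
    have hw : w ≠ Fin.last (n + 1) := fun h => hv (h ▸ parent_last f)
    obtain ⟨j, hj, rfl⟩ := exists_leaf_eq f hw
    rw [parent_leaf f hj] at hv ⊢
    have hjn : j < n := by_contra fun h => hv (seq_of_le f (by omega))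
    have hij : i ≤ j := by_contra fun h =>
      hwR (removed_eq_image f i ▸ mem_image_of_mem _ (mem_range.mpr (by omega)))
    exact mem_image_of_mem _ (mem_Ico.mpr ⟨hij, hjn⟩)

lemma blocked_eq_of_parent_eq {g : Fin n → Fin (n + 2)} (hfg : parent f = parent g) {i : ℕ}
    (hR : removed f i = removed g i) : blocked f i (removed f i) = blocked g i (removed g i) := by
  ext v
  simp only [blocked, mem_insert, mem_union]
  by_cases hv : v = Fin.last (n + 1)
  · simp [hv]
  by_cases hvR : v ∈ removed f i
  · simp [hvR, ← hR]
  · rw [mem_image_seq_iff f hv hvR, mem_image_seq_iff g hv (hR ▸ hvR), hfg, hR]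

lemma leaf_eq_of_parent_eq {g : Fin n → Fin (n + 2)} (hfg : parent f = parent g) {i : ℕ}
    (hR : removed f i = removed g i) : leaf f i = leaf g i := by
  rw [leaf, leaf, next, next, blocked_eq_of_parent_eq f hfg hR]

lemma removed_eq_of_parent_eq {g : Fin n → Fin (n + 2)} (hfg : parent f = parent g) :
    ∀ i, removed f i = removed g i
  | 0 => rfl
  | i + 1 => by
    have hR := removed_eq_of_parent_eq hfg i
    rw [removed, removed, ← leaf, ← leaf, leaf_eq_of_parent_eq f hfg hR, hR]

theorem parent_injective : Injective (parent : (Fin n → Fin (n + 2)) → _) := by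
  intro f g hfg
  funext k
  have hleaf := leaf_eq_of_parent_eq f hfg (removed_eq_of_parent_eq f hfg k)
  have := parent_leaf f k.isLt.le
  rw [hfg, hleaf, parent_leaf g k.isLt.le] at this
  simpa [seq] using this.symm

end Prufer

namespace SimpleGraph

variable {V : Type*} (Γ : SimpleGraph V)

theorem card_le_treeNumber [Finite V] {ι : Type*} {T : ι → SimpleGraph V} (hT : Injective T)
    (hle : ∀ i, T i ≤ Γ) (htree : ∀ i, (T i).IsTree) : Nat.card ι ≤ Γ.treeNumber := by
  let φ (i : ι) : {H : Γ.Subgraph // H.IsSpanning ∧ H.coe.IsTree} :=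
    ⟨toSubgraph (T i) (hle i), toSubgraph.isSpanning _ _,
      ((Subgraph.spanningCoeEquivCoeOfSpanning _ (toSubgraph.isSpanning _ _)).isTree_iff).mp
        (htree i)⟩
  refine Nat.card_le_card_of_injective φ fun i j hij => hT ?_
  ext v w
  change (φ i).1.Adj v w ↔ (φ j).1.Adj v w
  rw [hij]

theorem parentGraph_le {P : V → V} (h : ∀ v, P v ≠ v → Γ.Adj v (P v)) :
    parentGraph P ≤ Γ := by
  rintro v w ⟨hvw, rfl | rfl⟩
  · exact h v (Ne.symm hvw)
  · exact (h w hvw).symm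

theorem pow_le_treeNumber [Finite V] {n : ℕ} {e : Fin (n + 2) → V} (he : Injective e)
    (hclique : Pairwise fun i j => Γ.Adj (e i) (e j)) (k : Fin (n + 2))
    (hk : ∀ v, v ∉ Set.range e → Γ.Adj v (e k)) : (n + 2) ^ n ≤ Γ.treeNumber := by
  let P (f : Fin n → Fin (n + 2)) : V → V := extend e (e ∘ Prufer.parent f) fun _ => e k
  have hP f := (Prufer.isParentMap_parent f).extend he k
  have hPe f i : P f (e i) = e (Prufer.parent f i) := he.extend_apply _ _ _
  have hinj : Injective fun f => parentGraph (P f) := by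
    intro f g hfg
    have : P f = P g := (hP f).eq_of_le (hP g).map_root hfg.le
    exact Prufer.parent_injective (funext fun i => he (by rw [← hPe, ← hPe, this]))
  have hle f : parentGraph (P f) ≤ Γ := Γ.parentGraph_le fun v hv => by
    by_cases hve : v ∈ Set.range e
    · obtain ⟨i, rfl⟩ := hve
      rw [hPe] at hv ⊢
      exact hclique fun h => hv (h ▸ rfl)
    · rw [show P f v = e k from extend_apply' _ _ _ hve]
      exact hk v hve
  calc (n + 2) ^ n = Nat.card (Fin n → Fin (n + 2)) := by simp
    _ ≤ Γ.treeNumber := Γ.card_le_treeNumber hinj hle fun f => (hP f).isTree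

end SimpleGraph

section PowerGraph

variable {G : Type*} [Group G]

theorem powerGraph_adj_one {g : G} (hg : g ≠ 1) : (powerGraph G).Adj g 1 :=
  ⟨hg, Or.inr (Subgroup.one_mem _)⟩

theorem powerGraph_adj_of_mem_zpowers [Finite G] {x g h : G} (hx : (orderOf x).Prime)
    (hg : g ∈ Subgroup.zpowers x) (hh : h ∈ Subgroup.zpowers x) (hgh : g ≠ h) :
    (powerGraph G).Adj g h := by
  refine ⟨hgh, ?_⟩
  rcases hx.eq_one_or_self_of_dvd _ (orderOf_dvd_of_mem_zpowers hh) with h1 | hhx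
  · exact Or.inr (orderOf_eq_one_iff.mp h1 ▸ Subgroup.one_mem _)
  · left
    have : Subgroup.zpowers h = Subgroup.zpowers x :=
      Subgroup.eq_of_le_of_card_ge (Subgroup.zpowers_le.mpr hh)
        (by rw [Nat.card_zpowers, Nat.card_zpowers, hhx])
    exact this ▸ hg

theorem pow_le_treeNumber_powerGraph [Finite G] {x : G} (hx : (orderOf x).Prime) {n : ℕ}
    (hn : n + 2 ≤ orderOf x) : (n + 2) ^ n ≤ (powerGraph G).treeNumber := by
  have he : Injective fun i : Fin (n + 2) => x ^ (i : ℕ) := fun i j hij =>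
    Fin.ext (pow_injOn_Iio_orderOf (by simp; omega) (by simp; omega) hij)
  refine (powerGraph G).pow_le_treeNumber he
    (fun i j hij => powerGraph_adj_of_mem_zpowers hx (Subgroup.npow_mem_zpowers x i)
      (Subgroup.npow_mem_zpowers x j) (he.ne hij)) 0 fun v hv => ?_
  simpa using powerGraph_adj_one fun h => hv ⟨0, by simp [h]⟩

end PowerGraph

theorem prime_divisors_dvd_factorial_general (G : Type*) [Group G] [Finite G] (p : ℕ)
    (hp : p.Prime) (hlt : (powerGraph G).treeNumber < p ^ (p - 2)) :
    ∀ q : ℕ, q.Prime → q ∣ Nat.card G → q ∣ (p - 1).factorial := by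
  intro q hq hqG
  obtain ⟨n, rfl⟩ : ∃ n, p = n + 2 := ⟨p - 2, by have := hp.two_le; omega⟩
  refine Nat.dvd_factorial hq.pos (not_lt.mp fun hqn => ?_)
  obtain ⟨x, hx⟩ := exists_prime_orderOf_dvd_card' (hp := ⟨hq⟩) q hqG
  have := pow_le_treeNumber_powerGraph (hx ▸ hq) (n := n) (by omega)
  simp only [Nat.add_sub_cancel] at hlt
  omega

/-- If `p` is the smallest prime with `κ(G) < p ^ (p − 2)`, then every prime
divisor of `|G|` divides `(p − 1)!`. -/
theorem prime_divisors_dvd_factorial (G : Type*) [Group G] [Finite G] (p : ℕ)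
    (hp : p.Prime) (hlt : (powerGraph G).treeNumber < p ^ (p - 2))
    (hmin : ∀ q : ℕ, q.Prime → q < p → ¬ (powerGraph G).treeNumber < q ^ (q - 2)) :
    ∀ q : ℕ, q.Prime → q ∣ Nat.card G → q ∣ (p - 1).factorial :=
  prime_divisors_dvd_factorial_general G p hp hlt
end
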